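/- Let g: ℝ → ℂ be a continuously differentiable function supported on [X/2, 4X] with |g(x)| ≤ 1 and |g'(x)| ≤ C/X for all x, where X ≥ 1. Then for all real t₁, t₂, |∫ g(x) x^{2 + i(t₁ − t₂)} dx| ≪_C X³ / √((t₁ − t₂)² + 1). -/

import Mathlib

open Complex MeasureTheory Set

/-- Let `g : ℝ → ℂ` be continuously differentiable, supported on `[X/2, 4X]`, with
`|g| ≤ 1` and `|g'| ≤ C/X`, where `X ≥ 1`. Then for all real `t₁, t₂`,
`|∫ g(x) x^{2 + i(t₁ − t₂)} dx| ≪_C X³ / √((t₁ − t₂)² + 1)`. -/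
theorem integral_smooth_weight_bound (C : ℝ) (hC : 0 < C) :
    ∃ K > 0, ∀ (X : ℝ), 1 ≤ X → ∀ g : ℝ → ℂ,
      ContDiff ℝ 1 g →
      Function.support g ⊆ Icc (X / 2) (4 * X) →
      (∀ x : ℝ, ‖g x‖ ≤ 1) →
      (∀ x : ℝ, ‖deriv g x‖ ≤ C / X) →
      ∀ t₁ t₂ : ℝ,
        ‖∫ x : ℝ, g x * ((x : ℂ) ^ ((2 : ℂ) + Complex.I * ((t₁ - t₂ : ℝ) : ℂ)))‖ ≤
          K * X ^ 3 / Real.sqrt ((t₁ - t₂) ^ 2 + 1) := by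
  refine ⟨625 * C, by positivity, ?_⟩
  intro X hX g hg hsupp hg1 hgd t₁ t₂
  set τ : ℝ := t₁ - t₂ with hτ
  set s : ℂ := (2 : ℂ) + Complex.I * (τ : ℂ) with hs
  have hX0 : (0:ℝ) < X := by linarith
  have hab : X / 4 ≤ 5 * X := by linarith
  have hzero : ∀ x : ℝ, x ∉ Icc (X/2) (4*X) → g x = 0 := by
    intro x hx
    by_contra h
    exact hx (hsupp h)
  have hsne : s ≠ -1 := by
    intro h
    have := congrArg Complex.re h
    simp [hs] at this
    norm_num at this
  have hs1 : s + 1 = ((3:ℝ) : ℂ) + (τ : ℂ) * Complex.I := by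
    rw [hs]; push_cast; ring
  have hs1re : (s + 1).re = 3 := by rw [hs1]; simp
  have hS : (0:ℝ) < Real.sqrt (τ^2 + 1) := Real.sqrt_pos.mpr (by positivity)
  set S := Real.sqrt (τ^2 + 1) with hSdef
  have habs : S ≤ ‖s + 1‖ := by
    rw [hs1, Complex.norm_add_mul_I]
    exact Real.sqrt_le_sqrt (by nlinarith)
  have hs1ne : s + 1 ≠ 0 := by
    intro h
    rw [h] at habs
    simp at habs
    linarith
  -- the antiderivative
  set v : ℝ → ℂ := fun x => (x:ℂ) ^ (s + 1) / (s + 1) with hv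
  have hderiv_v : ∀ x ∈ Set.uIcc (X/4) (5*X), HasDerivAt v ((x:ℂ) ^ s) x := by
    intro x hx
    rw [Set.uIcc_of_le hab] at hx
    have hx0 : (0:ℝ) < x := lt_of_lt_of_le (by linarith) hx.1
    exact hasDerivAt_ofReal_cpow_const' hx0.ne' hsne
  have hderiv_g : ∀ x ∈ Set.uIcc (X/4) (5*X), HasDerivAt g (deriv g x) x := fun x _ =>
    ((hg.differentiable one_ne_zero) x).hasDerivAt
  have hint_g' : IntervalIntegrable (deriv g) volume (X/4) (5*X) :=
    (hg.continuous_deriv le_rfl).intervalIntegrable _ _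
  have hint_v' : IntervalIntegrable (fun x : ℝ => (x:ℂ) ^ s) volume (X/4) (5*X) := by
    apply ContinuousOn.intervalIntegrable
    intro x hx
    rw [Set.uIcc_of_le hab] at hx
    have hx0 : (0:ℝ) < x := lt_of_lt_of_le (by linarith) hx.1
    exact (Complex.continuousAt_ofReal_cpow_const x s (Or.inr hx0.ne')).continuousWithinAt
  have hibp := intervalIntegral.integral_mul_deriv_eq_deriv_mul hderiv_g hderiv_v hint_g' hint_v'
  have hgb1 : g (5*X) = 0 := hzero _ (by simp [Set.mem_Icc]; intro; linarith)
  have hgb2 : g (X/4) = 0 := hzero _ (by simp [Set.mem_Icc]; intro; linarith)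
  have heq : (∫ x : ℝ, g x * ((x : ℂ) ^ s)) = ∫ x in (X/4)..(5*X), g x * ((x : ℂ) ^ s) := by
    rw [intervalIntegral.integral_eq_integral_of_support_subset]
    intro x hx
    have hgx : g x ≠ 0 := by
      intro h; apply hx; simp [Function.mem_support, h]
    have := hsupp hgx
    constructor <;> [linarith [this.1]; linarith [this.2]]
  rw [heq, hibp, hgb1, hgb2]
  simp only [zero_mul, sub_zero, zero_sub, norm_neg]
  -- bound the remaining integral
  have hbound : ∀ x ∈ Set.Ioc (min (X/4) (5*X)) (max (X/4) (5*X)),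
      ‖deriv g x * v x‖ ≤ (C / X) * ((5*X)^3 / S) := by
    intro x hx
    rw [min_eq_left hab, max_eq_right hab] at hx
    have hx0 : (0:ℝ) < x := lt_of_le_of_lt (by linarith) hx.1
    rw [norm_mul, hv]
    have hnv : ‖(x:ℂ) ^ (s + 1) / (s + 1)‖ ≤ (5*X)^3 / S := by
      rw [norm_div,
        Complex.norm_cpow_eq_rpow_re_of_pos hx0, hs1re]
      have h1 : x ^ (3:ℝ) ≤ (5*X)^3 := by
        rw [show (3:ℝ) = ((3:ℕ):ℝ) by norm_num, Real.rpow_natCast]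
        exact pow_le_pow_left₀ hx0.le hx.2 3
      apply div_le_div₀ (by positivity) h1 hS habs
    exact mul_le_mul (hgd x) hnv (norm_nonneg _) (by positivity)
  refine le_trans (intervalIntegral.norm_integral_le_of_norm_le_const hbound) ?_
  have habs2 : |5*X - X/4| = 5*X - X/4 := abs_of_nonneg (by linarith)
  rw [habs2]
  have key : C / X * ((5*X)^3 / S) * (5*X - X/4) = (2375/4) * C * X^3 / S := by
    field_simp
    ring
  rw [key]
  rw [div_le_div_iff₀ hS hS]
  nlinarith [pow_pos hX0 3, mul_pos hC (pow_pos hX0 3), hS]
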